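/- arXiv:cond-mat/9704154 — 6 statements merged into one kernel-verified Lean document; each statement's English description precedes it below -/
import Mathlib

section
/- Let ζ ∈ (0,1), let z ∈ ℂ with z ≠ 0, and let n ∈ ℕ. Assume that for every k < n one has ζ + z·τ_z^{(k)}(1) ≠ 0 and 1 + ζ·z·τ_z^{(k)}(1) ≠ 0. Then τ_{1/z}^{(k)}(1) = 1/τ_z^{(k)}(1) for every k ≤ n; in particular τ_z^{(n)}(1)·τ_{1/z}^{(n)}(1) = 1. -/
/-- `h ζ w = ((ζ + w)/(1 + ζ w))^2`. -/
noncomputable def hmap (ζ : ℝ) (w : ℂ) : ℂ := (((ζ : ℂ) + w) / (1 + (ζ : ℂ) * w)) ^ 2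

/-- The `n`-th iterate `τ_z^{(n)}(1)` of `u ↦ h(z·u)` starting from `1`. -/
noncomputable def tauIter (ζ : ℝ) (z : ℂ) : ℕ → ℂ
  | 0 => 1
  | n + 1 => hmap ζ (z * tauIter ζ z n)

/-- If no denominator or numerator of `h` degenerates along the orbit up to step `n`, then
`τ_{1/z}^{(k)}(1) = 1/τ_z^{(k)}(1)` for all `k ≤ n`; in particular
`τ_z^{(n)}(1) · τ_{1/z}^{(n)}(1) = 1`. -/
theorem stmt1 (ζ : ℝ) (hζ0 : 0 < ζ) (hζ1 : ζ < 1) (z : ℂ) (hz : z ≠ 0) (n : ℕ)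
    (hnum : ∀ k < n, (ζ : ℂ) + z * tauIter ζ z k ≠ 0)
    (hden : ∀ k < n, 1 + (ζ : ℂ) * (z * tauIter ζ z k) ≠ 0) :
    (∀ k ≤ n, tauIter ζ (1 / z) k = 1 / tauIter ζ z k) ∧
    tauIter ζ z n * tauIter ζ (1 / z) n = 1 := by
  have key : ∀ k ≤ n, tauIter ζ (1 / z) k = 1 / tauIter ζ z k ∧ tauIter ζ z k ≠ 0 := by
    intro k
    induction k with
    | zero => intro _; simp [tauIter]
    | succ k ih =>
      intro hk
      have hk' : k ≤ n := Nat.le_of_succ_le hk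
      have hkn : k < n := hk
      obtain ⟨heq, hne⟩ := ih hk'
      have hnum' := hnum k hkn
      have hden' := hden k hkn
      constructor
      · rw [tauIter, tauIter, heq, hmap, hmap]
        rw [one_div, one_div, ← mul_inv]
        have hw0 : z * tauIter ζ z k ≠ 0 := mul_ne_zero hz hne
        set w := z * tauIter ζ z k with hw
        have h1 : ((ζ : ℂ) + w⁻¹) / (1 + (ζ : ℂ) * w⁻¹) = (1 + (ζ : ℂ) * w) / ((ζ : ℂ) + w) := by
          rw [div_eq_div_iff _ hnum']
          · field_simp
            ring
          · intro habs
            apply hnum'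
            have h2 : (1 + (ζ : ℂ) * w⁻¹) * w = w + (ζ : ℂ) := by
              field_simp
            rw [habs, zero_mul] at h2
            rw [add_comm]
            exact h2.symm
        rw [h1, one_div, ← inv_pow, inv_div]
      · rw [tauIter, hmap]
        exact pow_ne_zero _ (div_ne_zero hnum' hden')
  refine ⟨fun k hk => (key k hk).1, ?_⟩
  obtain ⟨heq, hne⟩ := key n le_rfl
  rw [heq]
  field_simp
end

section
/- (First Analyticity Theorem) Let ζ ∈ [0,1), let r ∈ ℕ with r ≥ 1, and let (a_n)_{n∈ℕ} be a summable sequence of nonnegative real numbers. Then for every z in the open unit disk D = {z ∈ ℂ : |z| < 1} the series F_r(z) = Σ_{n=0}^∞ a_n · (τ_z^{(n)}(1))^r converges, and the function z ↦ F_r(z) is analytic on D. -/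
section Blaschke

theorem normSq_one_add_mul_sub_normSq_add (ζ : ℝ) (w : ℂ) :
    Complex.normSq (1 + ζ * w) - Complex.normSq (ζ + w) =
      (1 - ζ ^ 2) * (1 - Complex.normSq w) := by
  simp only [Complex.normSq_apply, Complex.add_re, Complex.add_im, Complex.mul_re,
    Complex.mul_im, Complex.ofReal_re, Complex.ofReal_im, Complex.one_re, Complex.one_im]
  ring

variable {ζ : ℝ} {w : ℂ}

theorem norm_add_le_norm_one_add_mul (hζ : |ζ| ≤ 1) (hw : ‖w‖ ≤ 1) :
    ‖(ζ : ℂ) + w‖ ≤ ‖1 + (ζ : ℂ) * w‖ := by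
  have hζ2 : 0 ≤ 1 - ζ ^ 2 := by nlinarith [sq_abs ζ, abs_nonneg ζ]
  have hw2 : 0 ≤ 1 - Complex.normSq w := by
    rw [Complex.normSq_eq_norm_sq]; nlinarith [norm_nonneg w]
  rw [Complex.norm_def, Complex.norm_def]
  apply Real.sqrt_le_sqrt
  linarith [normSq_one_add_mul_sub_normSq_add ζ w, mul_nonneg hζ2 hw2]

theorem one_add_mul_ne_zero (hζ : |ζ| ≤ 1) (hw : ‖w‖ < 1) : 1 + (ζ : ℂ) * w ≠ 0 := by
  intro h
  have hnorm : ‖(ζ : ℂ) * w‖ < 1 := by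
    rw [norm_mul, Complex.norm_real, Real.norm_eq_abs]
    nlinarith [abs_nonneg ζ, norm_nonneg w]
  rw [eq_neg_of_add_eq_zero_right h, norm_neg, norm_one] at hnorm
  exact lt_irrefl 1 hnorm

theorem norm_hmap_le_one (hζ : |ζ| ≤ 1) (hw : ‖w‖ < 1) : ‖hmap ζ w‖ ≤ 1 := by
  have hden : 0 < ‖1 + (ζ : ℂ) * w‖ := norm_pos_iff.mpr (one_add_mul_ne_zero hζ hw)
  rw [hmap, norm_pow, norm_div]
  exact pow_le_one₀ (by positivity)
    ((div_le_one hden).mpr (norm_add_le_norm_one_add_mul hζ hw.le))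

theorem differentiableOn_hmap (hζ : |ζ| ≤ 1) :
    DifferentiableOn ℂ (hmap ζ) {w : ℂ | ‖w‖ < 1} := by
  intro w hw
  have hden := one_add_mul_ne_zero hζ hw
  unfold hmap
  fun_prop (disch := exact hden)

end Blaschke

section Iterates

variable {ζ : ℝ} {z : ℂ}

theorem norm_mul_lt_one {u : ℂ} (hz : ‖z‖ < 1) (hu : ‖u‖ ≤ 1) : ‖z * u‖ < 1 := by
  rw [norm_mul]
  nlinarith [norm_nonneg z, norm_nonneg u]

theorem norm_tauIter_le_one (hζ : |ζ| ≤ 1) (hz : ‖z‖ < 1) (n : ℕ) : ‖tauIter ζ z n‖ ≤ 1 := by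
  induction n with
  | zero => simp [tauIter]
  | succ n ih => exact norm_hmap_le_one hζ (norm_mul_lt_one hz ih)

theorem differentiableOn_tauIter (hζ : |ζ| ≤ 1) (n : ℕ) :
    DifferentiableOn ℂ (fun z => tauIter ζ z n) {z : ℂ | ‖z‖ < 1} := by
  induction n with
  | zero => exact differentiableOn_const 1
  | succ n ih =>
    exact (differentiableOn_hmap hζ).comp (differentiableOn_id.mul ih)
      fun z hz => norm_mul_lt_one hz (norm_tauIter_le_one hζ hz n)

end Iterates

theorem stmt2_general (ζ : ℝ) (hζ0 : 0 ≤ ζ) (hζ1 : ζ < 1) (r : ℕ)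
    (a : ℕ → ℝ) (ha : Summable a) :
    (∀ z ∈ {z : ℂ | ‖z‖ < 1},
        Summable (fun n : ℕ => (a n : ℂ) * (tauIter ζ z n) ^ r)) ∧
    AnalyticOnNhd ℂ (fun z => ∑' n : ℕ, (a n : ℂ) * (tauIter ζ z n) ^ r)
      {z : ℂ | ‖z‖ < 1} := by
  have hζ : |ζ| ≤ 1 := abs_le.mpr ⟨by linarith, hζ1.le⟩
  have hbound : ∀ n, ∀ z ∈ {z : ℂ | ‖z‖ < 1}, ‖(a n : ℂ) * tauIter ζ z n ^ r‖ ≤ ‖a n‖ := by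
    intro n z hz
    rw [norm_mul, norm_pow, Complex.norm_real]
    exact mul_le_of_le_one_right (norm_nonneg _)
      (pow_le_one₀ (norm_nonneg _) (norm_tauIter_le_one hζ hz n))
  have hdisc : IsOpen {z : ℂ | ‖z‖ < 1} := isOpen_lt continuous_norm continuous_const
  refine ⟨fun z hz => ha.norm.of_norm_bounded fun n => hbound n z hz, ?_⟩
  exact (Complex.differentiableOn_tsum_of_summable_norm ha.norm
    (fun n => (differentiableOn_const _).mul ((differentiableOn_tauIter hζ n).pow r))
    hdisc hbound).analyticOnNhd hdisc

/-- (First Analyticity Theorem.) For `0 ≤ ζ < 1`, `r ≥ 1` and a summable sequence of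
nonnegative reals `a`, the series `F_r(z) = Σ aₙ (τ_z^{(n)}(1))^r` converges at every
point of the open unit disk and defines an analytic function there. -/
theorem stmt2 (ζ : ℝ) (hζ0 : 0 ≤ ζ) (hζ1 : ζ < 1) (r : ℕ) (hr : 1 ≤ r)
    (a : ℕ → ℝ) (ha : Summable a) (ha' : ∀ n, 0 ≤ a n) :
    (∀ z ∈ {z : ℂ | ‖z‖ < 1},
        Summable (fun n : ℕ => (a n : ℂ) * (tauIter ζ z n) ^ r)) ∧
    AnalyticOnNhd ℂ (fun z => ∑' n : ℕ, (a n : ℂ) * (tauIter ζ z n) ^ r)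
      {z : ℂ | ‖z‖ < 1} :=
  stmt2_general ζ hζ0 hζ1 r a ha
end

section
/- Let ζ ∈ (0,1). Suppose τ : ℂ → ℂ is a function that is analytic on the open unit disk D = {w ∈ ℂ : |w| < 1}, has no zeros on D, and is such that the functions w ↦ τ_w^{(n)}(1) converge uniformly on D to τ as n → ∞. Let B ⊆ ℂ be a bounded open set whose closure is contained in {z ∈ ℂ : |z| > 1} \ closure(𝒵). Then the sequence of functions z ↦ τ_z^{(n)}(1) converges uniformly on B to the function z ↦ 1/τ(1/z). -/
/-- The pair `(P_n, Q_n)` of polynomials defined by `P_0 = Q_0 = 1`,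
`P_{n+1} = (ζ Q_n + X P_n)²`, `Q_{n+1} = (Q_n + ζ X P_n)²`. -/
noncomputable def PQ (ζ : ℝ) : ℕ → Polynomial ℂ × Polynomial ℂ
  | 0 => (1, 1)
  | n + 1 =>
    (((ζ : ℂ) • (PQ ζ n).2 + Polynomial.X * (PQ ζ n).1) ^ 2,
     ((PQ ζ n).2 + (ζ : ℂ) • (Polynomial.X * (PQ ζ n).1)) ^ 2)

noncomputable def Ppoly (ζ : ℝ) (n : ℕ) : Polynomial ℂ := (PQ ζ n).1

noncomputable def Qpoly (ζ : ℝ) (n : ℕ) : Polynomial ℂ := (PQ ζ n).2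

/-- `R_n = ζ·X·P_n + Q_n`. -/
noncomputable def Rpoly (ζ : ℝ) (n : ℕ) : Polynomial ℂ :=
  (ζ : ℂ) • (Polynomial.X * Ppoly ζ n) + Qpoly ζ n

/-- `𝒵_n`, the set of complex roots of `R_n`. -/
def Zset (ζ : ℝ) (n : ℕ) : Set ℂ := {z : ℂ | (Rpoly ζ n).eval z = 0}

/-- `𝒵 = ⋃ₙ 𝒵_n`. -/
def ZsetAll (ζ : ℝ) : Set ℂ := ⋃ n : ℕ, Zset ζ n

open Filter

open Polynomial

theorem TendstoUniformlyOn.inv₀ {ι α 𝕜 : Type*} [NormedDivisionRing 𝕜] {F : ι → α → 𝕜}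
    {f : α → 𝕜} {p : Filter ι} {s : Set α} {δ : ℝ} (hδ : 0 < δ) (hf : ∀ x ∈ s, δ ≤ ‖f x‖)
    (h : TendstoUniformlyOn F f p s) :
    TendstoUniformlyOn (fun n x => (F n x)⁻¹) (fun x => (f x)⁻¹) p s := by
  rw [Metric.tendstoUniformlyOn_iff] at h ⊢
  intro ε hε
  have hη : 0 < min (δ / 2) (ε * δ * δ / 2) := lt_min (by linarith) (by positivity)
  filter_upwards [h _ hη] with n hn x hx
  have hclose := hn x hx
  have hfx := hf x hx
  have hFx : δ / 2 < ‖F n x‖ := by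
    have := norm_sub_norm_le (f x) (F n x)
    rw [← dist_eq_norm] at this
    linarith [min_le_left (δ / 2) (ε * δ * δ / 2)]
  rw [dist_inv_inv₀ (norm_pos_iff.mp (by linarith)) (norm_pos_iff.mp (by linarith)),
    div_lt_iff₀ (mul_pos (by linarith) (by linarith))]
  calc dist (f x) (F n x) < ε * δ * δ / 2 := hclose.trans_le (min_le_right _ _)
    _ = ε * (δ * (δ / 2)) := by ring
    _ ≤ ε * (‖f x‖ * ‖F n x‖) := by gcongr

theorem IsCompact.exists_pos_le_norm {α E : Type*} [TopologicalSpace α] [NormedAddCommGroup E]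
    {s : Set α} {f : α → E} (hs : IsCompact s) (hf : ContinuousOn f s)
    (hf0 : ∀ x ∈ s, f x ≠ 0) : ∃ δ > 0, ∀ x ∈ s, δ ≤ ‖f x‖ := by
  rcases s.eq_empty_or_nonempty with rfl | hne
  · exact ⟨1, one_pos, by simp⟩
  obtain ⟨x₀, hx₀, hmin⟩ := hs.exists_isMinOn hne hf.norm
  exact ⟨‖f x₀‖, norm_pos_iff.mpr (hf0 x₀ hx₀), fun x hx => hmin hx⟩

section Iteration

variable (ζ : ℝ)

theorem hmap_inv {w : ℂ} (hw : w ≠ 0) : hmap ζ w⁻¹ = (hmap ζ w)⁻¹ := by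
  have hinv : ((ζ : ℂ) + w⁻¹) / (1 + ζ * w⁻¹) = (1 + ζ * w) / (ζ + w) := by
    rw [show (ζ : ℂ) + w⁻¹ = (1 + ζ * w) * w⁻¹ by field_simp; ring,
      show (1 : ℂ) + ζ * w⁻¹ = (ζ + w) * w⁻¹ by field_simp; ring,
      mul_div_mul_right _ _ (inv_ne_zero hw)]
  rw [hmap, hmap, hinv, ← inv_pow, inv_div]

theorem Ppoly_succ (n : ℕ) :
    Ppoly ζ (n + 1) = ((ζ : ℂ) • Qpoly ζ n + X * Ppoly ζ n) ^ 2 := rfl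

theorem Qpoly_succ (n : ℕ) : Qpoly ζ (n + 1) = Rpoly ζ n ^ 2 := by
  rw [Rpoly, add_comm (_ • _)]; rfl

variable {ζ}

/-- `‖ζ + w‖² - ‖1 + ζ w‖² = (1 - ζ²)(‖w‖² - 1)`. -/
theorem one_le_norm_hmap (hζ : |ζ| ≤ 1) {w : ℂ} (hw : 1 < ‖w‖)
    (hden : 1 + (ζ : ℂ) * w ≠ 0) : 1 ≤ ‖hmap ζ w‖ := by
  have hsq : ‖1 + (ζ : ℂ) * w‖ ^ 2 ≤ ‖(ζ : ℂ) + w‖ ^ 2 := by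
    have hw' : 1 ≤ w.re ^ 2 + w.im ^ 2 := by
      nlinarith [Complex.sq_norm w, Complex.normSq_apply w]
    have hζ' : ζ ^ 2 ≤ 1 := by nlinarith [sq_abs ζ, abs_nonneg ζ]
    simp only [Complex.sq_norm, Complex.normSq_apply, Complex.add_re, Complex.add_im,
      Complex.mul_re, Complex.mul_im, Complex.ofReal_re, Complex.ofReal_im, Complex.one_re,
      Complex.one_im]
    nlinarith [mul_nonneg (sub_nonneg.mpr hζ') (sub_nonneg.mpr hw')]
  have hle : ‖1 + (ζ : ℂ) * w‖ ≤ ‖(ζ : ℂ) + w‖ :=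
    (pow_le_pow_iff_left₀ (norm_nonneg _) (norm_nonneg _) two_ne_zero).mp hsq
  rw [hmap, norm_pow, norm_div]
  exact one_le_pow₀ ((one_le_div (norm_pos_iff.mpr hden)).mpr hle)

variable {z : ℂ}

theorem eval_Rpoly_ne_zero (hz : z ∉ closure (ZsetAll ζ)) (m : ℕ) :
    (Rpoly ζ m).eval z ≠ 0 :=
  fun hm => hz (subset_closure (Set.mem_iUnion.mpr ⟨m, hm⟩))

theorem eval_Qpoly_ne_zero (hR : ∀ m, (Rpoly ζ m).eval z ≠ 0) : ∀ n, (Qpoly ζ n).eval z ≠ 0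
  | 0 => by simp [Qpoly, PQ]
  | n + 1 => by rw [Qpoly_succ, eval_pow]; exact pow_ne_zero 2 (hR n)

theorem tauIter_eq_eval_div (hR : ∀ m, (Rpoly ζ m).eval z ≠ 0) (n : ℕ) :
    tauIter ζ z n = (Ppoly ζ n).eval z / (Qpoly ζ n).eval z := by
  induction n with
  | zero => simp [tauIter, Ppoly, Qpoly, PQ]
  | succ n ih =>
    have hQ := eval_Qpoly_ne_zero hR n
    have hRn := hR n
    simp only [Rpoly, eval_add, eval_smul, eval_mul, eval_X, smul_eq_mul] at hRn
    rw [tauIter, ih, hmap, Ppoly_succ, Qpoly_succ]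
    simp only [Rpoly, eval_add, eval_smul, eval_mul, eval_X, smul_eq_mul, eval_pow]
    rw [← div_pow]
    congr 1
    field_simp
    ring

theorem one_le_norm_tauIter (hζ : |ζ| ≤ 1) (hz : 1 < ‖z‖)
    (hR : ∀ m, (Rpoly ζ m).eval z ≠ 0) : ∀ n, 1 ≤ ‖tauIter ζ z n‖
  | 0 => by simp [tauIter]
  | n + 1 => by
    have hzs : 1 < ‖z * tauIter ζ z n‖ := by
      rw [norm_mul]
      nlinarith [one_le_norm_tauIter hζ hz hR n]
    refine one_le_norm_hmap hζ hzs fun hden => hR n ?_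
    have hRn : (Rpoly ζ n).eval z = (Qpoly ζ n).eval z * (1 + ζ * (z * tauIter ζ z n)) := by
      rw [tauIter_eq_eval_div hR, Rpoly]
      simp only [eval_add, eval_smul, eval_mul, eval_X, smul_eq_mul]
      field_simp [eval_Qpoly_ne_zero hR n]
      ring
    rw [hRn, hden, mul_zero]

theorem tauIter_inv (hz : z ≠ 0) (h : ∀ n, tauIter ζ z n ≠ 0) :
    ∀ n, tauIter ζ z⁻¹ n = (tauIter ζ z n)⁻¹
  | 0 => by simp [tauIter]
  | n + 1 => by
    rw [tauIter, tauIter, tauIter_inv hz h n, ← mul_inv, hmap_inv ζ (mul_ne_zero hz (h n))]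

end Iteration

theorem stmt10_general (ζ : ℝ) (hζ0 : 0 < ζ) (hζ1 : ζ < 1) (τ : ℂ → ℂ)
    (hτa : AnalyticOnNhd ℂ τ {w : ℂ | ‖w‖ < 1})
    (hτ0 : ∀ w ∈ {w : ℂ | ‖w‖ < 1}, τ w ≠ 0)
    (hτu : TendstoUniformlyOn (fun n w => tauIter ζ w n) τ atTop
      {w : ℂ | ‖w‖ < 1})
    (B : Set ℂ) (hBb : Bornology.IsBounded B)
    (hBc : closure B ⊆ {z : ℂ | 1 < ‖z‖} \ closure (ZsetAll ζ)) :
    TendstoUniformlyOn (fun n z => tauIter ζ z n) (fun z => 1 / τ (1 / z)) atTop B := by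
  have hζ : |ζ| ≤ 1 := abs_le.mpr ⟨by linarith, hζ1.le⟩
  have hinv_disk : Set.MapsTo (·⁻¹) (closure B) {w : ℂ | ‖w‖ < 1} := fun z hz =>
    by simpa using inv_lt_one_of_one_lt₀ (hBc hz).1
  obtain ⟨δ, hδ, hτδ⟩ := hBb.isCompact_closure.exists_pos_le_norm
    (hτa.continuousOn.comp (continuousOn_inv₀.mono fun z hz => norm_pos_iff.mp
      (one_pos.trans (hBc hz).1)) hinv_disk) fun z hz => hτ0 _ (hinv_disk hz)
  have hconv := ((hτu.comp (·⁻¹)).mono fun z hz => hinv_disk (subset_closure hz)).inv₀ hδ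
    fun z hz => hτδ z (subset_closure hz)
  simp only [one_div]
  refine hconv.congr (Eventually.of_forall fun n z hz => ?_)
  obtain ⟨hz1, hzZ⟩ := hBc (subset_closure hz)
  have hτn : ∀ k, tauIter ζ z k ≠ 0 := fun k =>
    norm_pos_iff.mp (one_pos.trans_le (one_le_norm_tauIter hζ hz1 (eval_Rpoly_ne_zero hzZ) k))
  simp only [Function.comp_apply, tauIter_inv (norm_pos_iff.mp (one_pos.trans hz1)) hτn n,
    inv_inv]

/-- If `τ` is analytic and zero-free on the open unit disk and is the uniform limit there
of the maps `w ↦ τ_w^{(n)}(1)`, then on any bounded open set `B` with closure contained in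
`{|z| > 1} \ closure 𝒵`, the maps `z ↦ τ_z^{(n)}(1)` converge uniformly to `z ↦ 1/τ(1/z)`. -/
theorem stmt10 (ζ : ℝ) (hζ0 : 0 < ζ) (hζ1 : ζ < 1) (τ : ℂ → ℂ)
    (hτa : AnalyticOnNhd ℂ τ {w : ℂ | ‖w‖ < 1})
    (hτ0 : ∀ w ∈ {w : ℂ | ‖w‖ < 1}, τ w ≠ 0)
    (hτu : TendstoUniformlyOn (fun n w => tauIter ζ w n) τ atTop
      {w : ℂ | ‖w‖ < 1})
    (B : Set ℂ) (hBo : IsOpen B) (hBb : Bornology.IsBounded B)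
    (hBc : closure B ⊆ {z : ℂ | 1 < ‖z‖} \ closure (ZsetAll ζ)) :
    TendstoUniformlyOn (fun n z => tauIter ζ z n) (fun z => 1 / τ (1 / z)) atTop B :=
  stmt10_general ζ hζ0 hζ1 τ hτa hτ0 hτu B hBb hBc
end

section
/- (Contraction Theorem) For every ζ ∈ (0, ζ₀) there exists ε > 0 such that for every u ∈ ℂ with 1 < |u| < 1/ζ + ε and every s ∈ ℂ with s² = u, one has |g(s)| < |u|. -/
/-- `g ζ w = (ζ − w)/(ζw − 1)`. -/
noncomputable def gmap (ζ : ℝ) (w : ℂ) : ℂ := ((ζ : ℂ) - w) / ((ζ : ℂ) * w - 1)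

/-!
Write `t = ‖s‖` and `x = Re s`. Then `t⁴ ‖ζs − 1‖² − ‖ζ − s‖²` factors as `(t² − 1) B` with
`B = ζ²(t⁴ + t² + 1) − 2ζx(t² + 1) + t²`, and since `x ≤ t`,
`B ≥ (ζ(t² + 1) − (1 + ζ)t)(ζ(t² + 1) − (1 − ζ)t)`. So `|g(s)| < |s|²` as soon as `t > 1` and
`ζ(t² + 1) < (1 − ζ)t`. Squared, the latter says that the convex quadratic
`ζ²(A + 1)² − (1 − ζ)²A` is negative at `A = t² = |u|`. It is negative at `A = 1` and at
`A = 1/ζ` exactly when `ζ³ + ζ² + 3ζ < 1`, hence on `[1, 1/ζ + ε]` for some `ε > 0`; and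
`ζ³ + ζ² + 3ζ − 1` vanishes at `ζ = s₀²` because it equals
`(σ³ + σ² + σ − 1)(σ³ − σ² + σ + 1)` for `ζ = σ²`.
-/

open Filter Topology

theorem norm_ofReal_sub_sq (ζ : ℝ) (s : ℂ) :
    ‖(ζ : ℂ) - s‖ ^ 2 = ζ ^ 2 - 2 * ζ * s.re + ‖s‖ ^ 2 := by
  simp only [Complex.sq_norm, Complex.normSq_apply, Complex.sub_re, Complex.sub_im,
    Complex.ofReal_re, Complex.ofReal_im]
  ring

theorem norm_ofReal_mul_sub_one_sq (ζ : ℝ) (s : ℂ) :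
    ‖(ζ : ℂ) * s - 1‖ ^ 2 = ζ ^ 2 * ‖s‖ ^ 2 - 2 * ζ * s.re + 1 := by
  simp only [Complex.sq_norm, Complex.normSq_apply, Complex.sub_re, Complex.sub_im,
    Complex.mul_re, Complex.mul_im, Complex.ofReal_re, Complex.ofReal_im,
    Complex.one_re, Complex.one_im]
  ring

theorem sub_sq_lt_sq_sq_mul {ζ x t : ℝ} (hζ : 0 ≤ ζ) (hx : x ≤ t) (ht : 1 < t)
    (h : ζ * (t ^ 2 + 1) < (1 - ζ) * t) :
    ζ ^ 2 - 2 * ζ * x + t ^ 2 < (t ^ 2) ^ 2 * (ζ ^ 2 * t ^ 2 - 2 * ζ * x + 1) := by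
  have hfactor : ζ ^ 2 * ((t ^ 2) ^ 2 + t ^ 2 + 1) - 2 * ζ * t * (t ^ 2 + 1) + t ^ 2
      = (ζ * (t ^ 2 + 1) - (1 + ζ) * t) * (ζ * (t ^ 2 + 1) - (1 - ζ) * t) := by ring
  have hprod : 0 < (ζ * (t ^ 2 + 1) - (1 + ζ) * t) * (ζ * (t ^ 2 + 1) - (1 - ζ) * t) :=
    mul_pos_of_neg_of_neg (by nlinarith) (by linarith)
  have hx' : ζ * x * (t ^ 2 + 1) ≤ ζ * t * (t ^ 2 + 1) := by gcongr
  have hB : 0 < ζ ^ 2 * ((t ^ 2) ^ 2 + t ^ 2 + 1) - 2 * ζ * x * (t ^ 2 + 1) + t ^ 2 := by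
    nlinarith
  have ht2 : 0 < t ^ 2 - 1 := by nlinarith
  nlinarith [mul_pos ht2 hB]

theorem norm_gmap_lt_sq_norm {ζ : ℝ} {s : ℂ} (hζ : 0 ≤ ζ) (hs : 1 < ‖s‖)
    (h : ζ * (‖s‖ ^ 2 + 1) < (1 - ζ) * ‖s‖) : ‖gmap ζ s‖ < ‖s‖ ^ 2 := by
  have key : ‖(ζ : ℂ) - s‖ < ‖s‖ ^ 2 * ‖(ζ : ℂ) * s - 1‖ := by
    refine lt_of_pow_lt_pow_left₀ 2 (by positivity) ?_
    rw [mul_pow, norm_ofReal_sub_sq, norm_ofReal_mul_sub_one_sq]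
    exact sub_sq_lt_sq_sq_mul hζ (Complex.re_le_norm s) hs h
  have hden : 0 < ‖(ζ : ℂ) * s - 1‖ :=
    pos_of_mul_pos_right ((norm_nonneg _).trans_lt key) (by positivity)
  rwa [gmap, norm_div, div_lt_iff₀ hden]

def contractionPoly (ζ A : ℝ) : ℝ := ζ ^ 2 * (A + 1) ^ 2 - (1 - ζ) ^ 2 * A

theorem mul_sq_add_one_lt_of_contractionPoly_neg {ζ t : ℝ} (hζ1 : ζ < 1) (ht : 0 ≤ t)
    (h : contractionPoly ζ (t ^ 2) < 0) : ζ * (t ^ 2 + 1) < (1 - ζ) * t := by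
  refine lt_of_pow_lt_pow_left₀ 2 (mul_nonneg (by linarith) ht) ?_
  unfold contractionPoly at h
  linarith

theorem contractionPoly_neg_of_mem_Icc {ζ a b A : ℝ} (ha : contractionPoly ζ a < 0)
    (hb : contractionPoly ζ b < 0) (hA : A ∈ Set.Icc a b) : contractionPoly ζ A < 0 := by
  obtain ⟨haA, hAb⟩ := hA
  rcases haA.eq_or_lt with rfl | haA
  · exact ha
  -- `contractionPoly ζ` minus its chord over `[a, b]` is `ζ² (A - a) (A - b) ≤ 0`.
  have hchord : contractionPoly ζ A * (b - a) = (b - A) * contractionPoly ζ a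
      + (A - a) * contractionPoly ζ b + ζ ^ 2 * (A - a) * (A - b) * (b - a) := by
    unfold contractionPoly; ring
  have hab : 0 < b - a := by linarith
  nlinarith [mul_nonneg (sub_nonneg.2 hAb) (neg_nonneg.2 ha.le),
    mul_nonneg (mul_nonneg (sq_nonneg ζ) (sub_nonneg.2 haA.le)) (sub_nonneg.2 hAb),
    mul_pos (sub_pos.2 haA) (neg_pos.2 hb)]

theorem cube_add_sq_add_three_mul_lt_one {s₀ ζ : ℝ} (hs₀ : s₀ ^ 3 + s₀ ^ 2 + s₀ - 1 = 0)
    (hζ0 : 0 ≤ ζ) (hζ : ζ < s₀ ^ 2) : ζ ^ 3 + ζ ^ 2 + 3 * ζ < 1 := by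
  have hroot : (s₀ ^ 2) ^ 3 + (s₀ ^ 2) ^ 2 + 3 * s₀ ^ 2 - 1 = 0 := by
    linear_combination (s₀ ^ 3 - s₀ ^ 2 + s₀ + 1) * hs₀
  have hmono : 0 < (s₀ ^ 2 - ζ) * ((s₀ ^ 2) ^ 2 + s₀ ^ 2 * ζ + ζ ^ 2 + s₀ ^ 2 + ζ + 3) :=
    mul_pos (by linarith) (by positivity)
  nlinarith

theorem exists_pos_contractionPoly_neg_on_Icc {ζ : ℝ} (hζ0 : 0 < ζ)
    (hζ : ζ ^ 3 + ζ ^ 2 + 3 * ζ < 1) :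
    ∃ ε > 0, ∀ A ∈ Set.Icc 1 (1 / ζ + ε), contractionPoly ζ A < 0 := by
  have hone : contractionPoly ζ 1 < 0 := by
    unfold contractionPoly; nlinarith [pow_pos hζ0 3]
  have hinv : contractionPoly ζ (1 / ζ) < 0 := by
    have : ζ * contractionPoly ζ (1 / ζ) = ζ ^ 3 + ζ ^ 2 + 3 * ζ - 1 := by
      unfold contractionPoly; field_simp; ring
    nlinarith
  have hcont : Continuous fun ε ↦ contractionPoly ζ (1 / ζ + ε) := by
    unfold contractionPoly; fun_prop
  have hev : ∀ᶠ ε in 𝓝[>] 0, contractionPoly ζ (1 / ζ + ε) < 0 :=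
    nhdsWithin_le_nhds <| hcont.continuousAt.eventually_lt continuousAt_const (by simpa using hinv)
  obtain ⟨ε, hε, hε0⟩ := (hev.and self_mem_nhdsWithin).exists
  exact ⟨ε, hε0, fun A hA ↦ contractionPoly_neg_of_mem_Icc hone hε hA⟩

theorem stmt12_general (s₀ : ℝ)
    (hs₀ : s₀ ^ 3 + s₀ ^ 2 + s₀ - 1 = 0)
    (ζ : ℝ) (hζ0 : 0 < ζ) (hζ : ζ < s₀ ^ 2) :
    ∃ ε : ℝ, 0 < ε ∧ ∀ u : ℂ, 1 < ‖u‖ → ‖u‖ < 1 / ζ + ε →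
      ∀ s : ℂ, s ^ 2 = u → ‖gmap ζ s‖ < ‖u‖ := by
  have hcubic := cube_add_sq_add_three_mul_lt_one hs₀ hζ0.le hζ
  obtain ⟨ε, hε, hneg⟩ := exists_pos_contractionPoly_neg_on_Icc hζ0 hcubic
  refine ⟨ε, hε, fun u hu1 hu2 s hs ↦ ?_⟩
  rw [← hs, norm_pow] at hu1 hu2 ⊢
  have hs1 : 1 < ‖s‖ := by nlinarith [norm_nonneg s]
  refine norm_gmap_lt_sq_norm hζ0.le hs1 ?_
  exact mul_sq_add_one_lt_of_contractionPoly_neg (by nlinarith) (norm_nonneg s)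
    (hneg _ ⟨hu1.le, hu2.le⟩)

/-- (Contraction Theorem.) Let `s₀ ∈ (0,1)` be the real root of `s³ + s² + s − 1 = 0` and
`ζ₀ = s₀²`. For every `ζ ∈ (0, ζ₀)` there is `ε > 0` such that every `u` with
`1 < |u| < 1/ζ + ε` satisfies `|g(s)| < |u|` for both square roots `s` of `u`. -/
theorem stmt12 (s₀ : ℝ) (hs₀0 : 0 < s₀) (hs₀1 : s₀ < 1)
    (hs₀ : s₀ ^ 3 + s₀ ^ 2 + s₀ - 1 = 0)
    (ζ : ℝ) (hζ0 : 0 < ζ) (hζ : ζ < s₀ ^ 2) :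
    ∃ ε : ℝ, 0 < ε ∧ ∀ u : ℂ, 1 < ‖u‖ → ‖u‖ < 1 / ζ + ε →
      ∀ s : ℂ, s ^ 2 = u → ‖gmap ζ s‖ < ‖u‖ :=
  stmt12_general s₀ hs₀ ζ hζ0 hζ
end

section
/- Let ζ ∈ (0, ζ₀). For every real number t with 1 < t < a₊(ζ), one has (ζ − t)² − t⁴·(1 − ζt)² < 0; equivalently, since 1 − ζt ≠ 0 in this range, (ζ − t)²/(1 − ζt)² < t⁴. -/
/-- `a₊(ζ) = (1−ζ)/(2ζ) + √((1+ζ)(1−3ζ))/(2ζ)`. -/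
noncomputable def aplus (ζ : ℝ) : ℝ :=
  (1 - ζ) / (2 * ζ) + Real.sqrt ((1 + ζ) * (1 - 3 * ζ)) / (2 * ζ)

/-- For `ζ ∈ (0, ζ₀)` (with `ζ₀ = s₀²`, `s₀` the real root of `s³ + s² + s − 1 = 0` in
`(0,1)`) and every real `t` with `1 < t < a₊(ζ)`, one has
`(ζ − t)² − t⁴(1 − ζt)² < 0`, equivalently `(ζ − t)²/(1 − ζt)² < t⁴`. -/
theorem stmt16 (s₀ : ℝ) (hs₀0 : 0 < s₀) (hs₀1 : s₀ < 1)
    (hs₀ : s₀ ^ 3 + s₀ ^ 2 + s₀ - 1 = 0)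
    (ζ : ℝ) (hζ0 : 0 < ζ) (hζ : ζ < s₀ ^ 2)
    (t : ℝ) (ht1 : 1 < t) (ht2 : t < aplus ζ) :
    (ζ - t) ^ 2 - t ^ 4 * (1 - ζ * t) ^ 2 < 0 ∧
    (1 - ζ * t ≠ 0) ∧
    (ζ - t) ^ 2 / (1 - ζ * t) ^ 2 < t ^ 4 := by
  -- ζ < 1/3
  have hζ3 : ζ < 1/3 := by
    nlinarith [sq_nonneg (s₀ - 0.544), sq_nonneg s₀, mul_pos hs₀0 hs₀0]
  set D : ℝ := (1 + ζ) * (1 - 3 * ζ) with hD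
  have hD0 : 0 ≤ D := by nlinarith
  set r : ℝ := Real.sqrt D with hrdef
  have hr0 : 0 ≤ r := Real.sqrt_nonneg _
  have hr2 : r ^ 2 = D := Real.sq_sqrt hD0
  have h1 : 1 - 3 * ζ ≤ r := by nlinarith
  have haplus : aplus ζ = ((1 - ζ) + r) / (2 * ζ) := by rw [aplus]; ring
  rw [haplus] at ht2
  have h2 : t * (2 * ζ) < (1 - ζ) + r := (lt_div_iff₀ (by positivity)).mp ht2
  have htζ : ζ < ζ * t := by nlinarith
  have hu1 : 0 < 1 - ζ + r - 2 * ζ * t := by linarith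
  have hu2 : 0 < r + 2 * ζ * t - (1 - ζ) := by linarith
  have hprod := mul_pos hu1 hu2
  have hkey : ζ * (t ^ 2 + t + 1) < t := by nlinarith [hprod, hr2]
  have h1ζt : 0 < 1 - ζ * t := by nlinarith
  have hA : t - ζ < t ^ 2 * (1 - ζ * t) := by
    nlinarith [mul_pos (by linarith : (0:ℝ) < t - 1)
      (by linarith : 0 < t - ζ * (t ^ 2 + t + 1))]
  have htζ0 : 0 < t - ζ := by nlinarith
  have hsq := mul_lt_mul'' hA hA htζ0.le htζ0.le
  have hmain : (ζ - t) ^ 2 - t ^ 4 * (1 - ζ * t) ^ 2 < 0 := by nlinarith [hsq]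
  refine ⟨hmain, by positivity, ?_⟩
  rw [div_lt_iff₀ (by positivity)]
  linarith [hmain]
end

section
/- For every ζ ∈ (0, ζ₀) one has a₊(ζ) > 1/√ζ. -/
/-! With `s = √ζ`, the inequality `1/s < a₊(s²)` amounts to `s² + 2s − 1 < √((1+s²)(1−3s²))`,
and the gap between the radicand and the square of the left side factors as
`4s(1 − s − s² − s³)`. So the inequality holds exactly while `s³ + s² + s < 1`, that is, for
`s` below the root `s₀` of the cubic. -/

lemma cubic_lt_one_of_lt_root {s s₀ : ℝ} (hs : 0 ≤ s) (hss₀ : s < s₀)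
    (hs₀ : s₀ ^ 3 + s₀ ^ 2 + s₀ - 1 = 0) : s ^ 3 + s ^ 2 + s < 1 := by
  have hcube : s ^ 3 < s₀ ^ 3 := pow_lt_pow_left₀ hss₀ hs three_ne_zero
  have hsq : s ^ 2 < s₀ ^ 2 := pow_lt_pow_left₀ hss₀ hs two_ne_zero
  linarith

lemma aplus_radicand_sub_sq (s : ℝ) :
    (1 + s ^ 2) * (1 - 3 * s ^ 2) - (s ^ 2 + 2 * s - 1) ^ 2 = 4 * s * (1 - s - s ^ 2 - s ^ 3) := by
  ring

lemma lt_sqrt_aplus_radicand {s : ℝ} (hs : 0 < s) (hcubic : s ^ 3 + s ^ 2 + s < 1) :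
    s ^ 2 + 2 * s - 1 < Real.sqrt ((1 + s ^ 2) * (1 - 3 * s ^ 2)) := by
  apply Real.lt_sqrt_of_sq_lt
  have hgap : 0 < 4 * s * (1 - s - s ^ 2 - s ^ 3) := by
    have : 0 < 1 - s - s ^ 2 - s ^ 3 := by linarith
    positivity
  linarith [aplus_radicand_sub_sq s]

lemma one_div_lt_aplus_sq {s : ℝ} (hs : 0 < s)
    (h : s ^ 2 + 2 * s - 1 < Real.sqrt ((1 + s ^ 2) * (1 - 3 * s ^ 2))) :
    1 / s < aplus (s ^ 2) := by
  rw [aplus, ← add_div, div_lt_div_iff₀ hs (by positivity)]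
  nlinarith

theorem stmt18_general (s₀ : ℝ) (hs₀0 : 0 < s₀)
    (hs₀ : s₀ ^ 3 + s₀ ^ 2 + s₀ - 1 = 0)
    (ζ : ℝ) (hζ0 : 0 < ζ) (hζ : ζ < s₀ ^ 2) :
    1 / Real.sqrt ζ < aplus ζ := by
  have hs : 0 < Real.sqrt ζ := Real.sqrt_pos.mpr hζ0
  have hss₀ : Real.sqrt ζ < s₀ := (Real.sqrt_lt' hs₀0).mpr hζ
  have hcubic := cubic_lt_one_of_lt_root hs.le hss₀ hs₀
  simpa only [Real.sq_sqrt hζ0.le] using one_div_lt_aplus_sq hs (lt_sqrt_aplus_radicand hs hcubic)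

/-- For every `ζ ∈ (0, ζ₀)` (with `ζ₀ = s₀²`, `s₀` the real root of `s³ + s² + s − 1 = 0`
in `(0,1)`), one has `a₊(ζ) > 1/√ζ`. -/
theorem stmt18 (s₀ : ℝ) (hs₀0 : 0 < s₀) (hs₀1 : s₀ < 1)
    (hs₀ : s₀ ^ 3 + s₀ ^ 2 + s₀ - 1 = 0)
    (ζ : ℝ) (hζ0 : 0 < ζ) (hζ : ζ < s₀ ^ 2) :
    1 / Real.sqrt ζ < aplus ζ :=
  stmt18_general s₀ hs₀0 hs₀ ζ hζ0 hζ
end
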